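/- arXiv:2001.11918 — 9 statements merged into one kernel-verified Lean document; each statement's English description precedes it below -/
import Mathlib

section
/- Let n ≥ 1 and let A be an n×n real matrix all of whose column sums vanish (∑_{i} A_{i k} = 0 for every column k). Then every row of the adjugate of A is a constant vector: adj(A)_{i k} = adj(A)_{i k'} for all indices i, k, k'. Equivalently, the signed cofactor (−1)^{i+k} det(A^{k i}), where A^{k i} denotes A with row k and column i deleted, is independent of k. -/
/-!
Column sums of `A` vanish exactly when its rows sum to zero, and `adj(A) i k` is the determinant
of `A` with row `k` replaced by `eᵢ`. For an alternating map `f` and vectors with `∑ xⱼ = 0`,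
expanding `x_{k'} = -∑_{j ≠ k'} xⱼ` in `f (x with v in slot k)` kills every term with a repeated
argument except `j = k`, and the transposition of slots `k, k'` turns that term into
`f (x with v in slot k')`.
-/

open Function Finset

theorem AlternatingMap.map_update_eq_of_sum_eq_zero {R M N ι : Type*} [Semiring R]
    [AddCommGroup M] [Module R M] [AddCommGroup N] [Module R N] [Fintype ι] [DecidableEq ι]
    (f : M [⋀^ι]→ₗ[R] N) {x : ι → M} (hx : ∑ j, x j = 0) (v : M) (k k' : ι) :
    f (update x k v) = f (update x k' v) := by
  rcases eq_or_ne k k' with rfl | hkk'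
  · rfl
  have hxk' : x k' = ∑ j ∈ univ.erase k', -x j := by
    rw [sum_neg_distrib, eq_neg_iff_add_eq_zero, add_sum_erase _ _ (mem_univ k'), hx]
  calc f (update x k v) = f (update (update x k v) k' (x k')) := by
        rw [← update_of_ne hkk'.symm v x, update_eq_self]
    _ = -∑ j ∈ univ.erase k', f (update (update x k v) k' (x j)) := by
        simp only [hxk', map_update_sum, map_update_neg, sum_neg_distrib]
    _ = -f (update (update x k v) k' (x k)) := by
        rw [sum_eq_single_of_mem k (mem_erase.mpr ⟨hkk', mem_univ k⟩)]
        intro j hj hjk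
        have hjk' : j ≠ k' := (mem_erase.mp hj).1
        exact f.map_eq_zero_of_eq _ (i := j) (j := k')
          (by rw [update_self, update_of_ne hjk', update_of_ne hjk]) hjk'
    _ = -f (update x k' v ∘ Equiv.swap k k') := by
        rw [Equiv.comp_swap_eq_update, update_idem, update_self, update_of_ne hkk',
          update_comm hkk'.symm]
    _ = f (update x k' v) := by rw [f.map_swap _ hkk', neg_neg]

theorem Matrix.det_updateRow_eq_of_sum_rows_eq_zero {n R : Type*} [Fintype n] [DecidableEq n]
    [CommRing R] {A : Matrix n n R} (hA : ∑ j, A j = 0) (v : n → R) (k k' : n) :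
    (A.updateRow k v).det = (A.updateRow k' v).det :=
  (detRowAlternating : (n → R) [⋀^n]→ₗ[R] R).map_update_eq_of_sum_eq_zero hA v k k'

open Matrix BigOperators

theorem adjugate_row_constant_of_colSums_eq_zero_general
    (n : ℕ) (A : Matrix (Fin n) (Fin n) ℝ)
    (hcol : ∀ k : Fin n, ∑ i : Fin n, A i k = 0) :
    ∀ i k k' : Fin n, A.adjugate i k = A.adjugate i k' := by
  have hrows : ∑ j, A j = 0 := funext fun c => (Finset.sum_apply c _ _).trans (hcol c)
  intro i k k'
  rw [adjugate_apply, adjugate_apply]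
  exact det_updateRow_eq_of_sum_rows_eq_zero hrows _ k k'

/-- If every column of an `n × n` real matrix sums to zero (a Laplacian-type matrix),
then every row of its adjugate is a constant vector: the signed cofactor
`adj(A) i k = (-1)^(i+k) det(A with row k and column i deleted)` is independent of `k`. -/
theorem adjugate_row_constant_of_colSums_eq_zero
    (n : ℕ) (hn : 1 ≤ n) (A : Matrix (Fin n) (Fin n) ℝ)
    (hcol : ∀ k : Fin n, ∑ i : Fin n, A i k = 0) :
    ∀ i k k' : Fin n, A.adjugate i k = A.adjugate i k' :=
  adjugate_row_constant_of_colSums_eq_zero_general n A hcol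
end

section
/- Let A be an n×n real matrix with all column sums zero. For an index i, let A^{0i} denote the n×(n−1) matrix obtained from A by deleting column i, and let A^{k i} denote the (n−1)×(n−1) matrix obtained by deleting row k and column i. Then for every row index k, det((A^{0i})ᵀ · A^{0i}) = n · (det A^{k i})². -/
/-!
Replace column `i` of `A` by the all-ones vector to get `D`. The cofactors of column `i` all
agree: the difference of two of them is the determinant of `A` with column `i` replaced by
`eₖ - eₗ`, a matrix whose column sums still vanish, hence singular. Expanding along column `i`
therefore gives `det D = (n + 1) c` with `c = ± det Aᵏⁱ`. On the other hand the columns of `A`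
are orthogonal to the ones vector, so column `i` of `Dᵀ D` is `(n + 1) eᵢ` and
`det D ^ 2 = det (Dᵀ D) = (n + 1) det (A⁰ⁱᵀ A⁰ⁱ)`.
-/

open Matrix

namespace Matrix

section ColumnSums

variable {n R : Type*} [Fintype n] [DecidableEq n] [CommRing R] [IsDomain R]

theorem det_eq_zero_of_column_sums_eq_zero [Nonempty n] {M : Matrix n n R}
    (hM : ∀ j, ∑ k, M k j = 0) : M.det = 0 := by
  refine exists_vecMul_eq_zero_iff.mp
    ⟨fun _ => 1, Function.ne_iff.mpr ⟨Classical.arbitrary n, one_ne_zero⟩, funext fun j => ?_⟩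
  simpa [vecMul, dotProduct] using hM j

theorem det_updateCol_eq_zero_of_column_sums_eq_zero {A : Matrix n n R}
    (hA : ∀ j, ∑ k, A k j = 0) (i : n) {b : n → R} (hb : ∑ k, b k = 0) :
    (A.updateCol i b).det = 0 := by
  have : Nonempty n := ⟨i⟩
  refine det_eq_zero_of_column_sums_eq_zero fun j => ?_
  rcases eq_or_ne j i with rfl | hj
  · simpa [updateCol_apply] using hb
  · simpa [updateCol_apply, hj] using hA j

theorem adjugate_apply_eq_of_column_sums_eq_zero {A : Matrix n n R}
    (hA : ∀ j, ∑ k, A k j = 0) (i k l : n) : adjugate A i k = adjugate A i l := by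
  have h := det_updateCol_eq_zero_of_column_sums_eq_zero hA i
    (b := Pi.single k 1 - Pi.single l 1) (by simp [Finset.sum_sub_distrib])
  rw [← cramer_apply, map_sub, Pi.sub_apply, sub_eq_zero, cramer_eq_adjugate_mulVec,
    cramer_eq_adjugate_mulVec, mulVec_single_one, mulVec_single_one] at h
  exact h

theorem det_updateCol_eq_sum_mul_adjugate {A : Matrix n n R}
    (hA : ∀ j, ∑ k, A k j = 0) (i k : n) (b : n → R) :
    (A.updateCol i b).det = (∑ l, b l) * adjugate A i k := by
  rw [← cramer_apply, cramer_eq_adjugate_mulVec, mulVec, dotProduct, Finset.sum_mul]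
  exact Finset.sum_congr rfl fun l _ => by
    rw [adjugate_apply_eq_of_column_sums_eq_zero hA i l k, mul_comm]

end ColumnSums

section Gram

variable {m : ℕ} {R : Type*} [CommRing R]

theorem det_eq_mul_det_submatrix_of_col_eq_single (M : Matrix (Fin (m + 1)) (Fin (m + 1)) R)
    (j : Fin (m + 1)) (c : R) (hM : ∀ p, M p j = (Pi.single j c : Fin (m + 1) → R) p) :
    M.det = c * (M.submatrix j.succAbove j.succAbove).det := by
  rw [det_succ_column M j, Fintype.sum_eq_single j fun p hp => by simp [hM, hp]]
  simp [hM, ← two_mul, pow_mul]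

theorem det_transpose_mul_self_updateCol_one (A : Matrix (Fin (m + 1)) (Fin (m + 1)) R)
    (hA : ∀ j, ∑ k, A k j = 0) (i : Fin (m + 1)) :
    ((A.updateCol i 1)ᵀ * A.updateCol i 1).det
      = (m + 1) * ((A.submatrix id i.succAbove)ᵀ * A.submatrix id i.succAbove).det := by
  refine (det_eq_mul_det_submatrix_of_col_eq_single _ i ((m : R) + 1) fun p => ?_).trans ?_
  · rcases eq_or_ne p i with rfl | hp
    · simp [mul_apply]
    · simpa [mul_apply, updateCol_apply, hp] using hA p
  · rw [submatrix_mul _ _ _ id _ Function.bijective_id, ← transpose_submatrix,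
      submatrix_updateCol_succAbove]

end Gram

end Matrix

/-- For an `(n+1) × (n+1)` real matrix `A` with zero column sums, the Gram determinant of
the matrix `A⁰ⁱ` obtained by deleting column `i` equals `n+1` times the square of the
determinant of the matrix obtained by deleting row `k` and column `i`, for every row `k`. -/
theorem gram_det_of_delete_col_eq_card_mul_sq_cofactor
    (n : ℕ) (A : Matrix (Fin (n + 1)) (Fin (n + 1)) ℝ)
    (hcol : ∀ k : Fin (n + 1), ∑ i : Fin (n + 1), A i k = 0)
    (i : Fin (n + 1)) :
    ∀ k : Fin (n + 1),
      ((A.submatrix id i.succAbove)ᵀ * A.submatrix id i.succAbove).det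
        = ((n : ℝ) + 1) * ((A.submatrix k.succAbove i.succAbove).det) ^ 2 := by
  intro k
  have hD : (A.updateCol i 1).det = (n + 1) * adjugate A i k := by
    simp [det_updateCol_eq_sum_mul_adjugate hcol i k]
  have hgram := det_transpose_mul_self_updateCol_one A hcol i
  rw [det_mul, det_transpose, hD, adjugate_fin_succ_eq_det_submatrix] at hgram
  have hsign : (-1 : ℝ) ^ (k + i : ℕ) * (-1) ^ (k + i : ℕ) = 1 := by
    rw [← pow_add, ← two_mul, pow_mul, neg_one_sq, one_pow]
  apply mul_left_cancel₀ (by positivity : (n : ℝ) + 1 ≠ 0)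
  rw [← hgram]
  linear_combination ((n + 1) * (A.submatrix k.succAbove i.succAbove).det) ^ 2 * hsign
end

section
/- Let A be an n×n real matrix with columns v₁, …, vₙ ∈ ℝⁿ, let i ≠ j be two column indices, let W be the linear span of the remaining columns {v_l : l ≠ i, l ≠ j}, and let P denote the orthogonal projection of ℝⁿ onto W. Then √(det((A^{0i})ᵀ A^{0i})) · ‖v_i − P v_i‖ = √(det((A^{0j})ᵀ A^{0j})) · ‖v_j − P v_j‖, where A^{0k} denotes A with column k deleted and ‖·‖ is the Euclidean norm. -/
/-!
`det((A⁰ⁱ)ᵀ A⁰ⁱ)` is the Gram determinant of the columns other than `i`. Replacing `v j` by its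
residual `v j - P (v j)` is a unipotent change of the family and leaves that determinant unchanged;
afterwards row `j` of the Gram matrix vanishes off the diagonal, so the determinant factors as the
Gram determinant of the common base times `‖v j - P (v j)‖²`. Hence the square of either side equals
the base Gram determinant times `‖v i - P (v i)‖² ‖v j - P (v j)‖²`.
-/

open Matrix
open scoped InnerProductSpace

theorem Fin.range_succAbove_comp_succAbove {m : ℕ} (i : Fin (m + 2)) (k : Fin (m + 1)) :
    Set.range (i.succAbove ∘ k.succAbove) = {i, i.succAbove k}ᶜ := by
  rw [Set.range_comp, range_succAbove,
    Set.image_compl_eq_range_sdiff_image succAbove_right_injective, range_succAbove,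
    Set.image_singleton, Set.insert_eq, Set.compl_union, Set.sdiff_eq]

section Gram

variable {𝕜 E : Type*} [RCLike 𝕜] [NormedAddCommGroup E] [InnerProductSpace 𝕜 E]

instance Submodule.finiteDimensional_span_range {ι : Type*} [Finite ι] (w : ι → E) :
    FiniteDimensional 𝕜 (Submodule.span 𝕜 (Set.range w)) :=
  FiniteDimensional.span_of_finite 𝕜 (Set.finite_range w)

theorem Matrix.gram_eq_conjTranspose_mul_self {m ι : Type*} [Fintype m] (B : Matrix m ι 𝕜)
    (w : ι → EuclideanSpace 𝕜 m) (hw : ∀ l r, w l r = B r l) : gram 𝕜 w = Bᴴ * B := by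
  ext a b
  simp [gram_apply, mul_apply, PiLp.inner_apply, hw, mul_comm]

theorem Matrix.gram_sum_smul {ι : Type*} [Fintype ι] (w : ι → E) (T : Matrix ι ι 𝕜) :
    gram 𝕜 (fun a => ∑ b, T b a • w b) = Tᴴ * gram 𝕜 w * T := by
  ext a c
  simp only [gram_apply, sum_inner, inner_sum, inner_smul_left, inner_smul_right, mul_apply,
    conjTranspose_apply, Finset.sum_mul, Finset.mul_sum, RCLike.star_def]
  exact Finset.sum_congr rfl fun _ _ => Finset.sum_congr rfl fun _ _ => by ring

theorem Matrix.det_gram_update_add_sum_smul {ι : Type*} [Fintype ι] [DecidableEq ι]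
    (w : ι → E) (a : ι) (c : ι → 𝕜) (hc : c a = 0) :
    (gram 𝕜 (Function.update w a (w a + ∑ b, c b • w b))).det = (gram 𝕜 w).det := by
  set T : Matrix ι ι 𝕜 := 1 + vecMulVec c (Pi.single a 1) with hT_def
  have hT : T.det = 1 := by
    rw [hT_def, vecMulVec_eq Unit, det_one_add_replicateCol_mul_replicateRow,
      single_dotProduct, one_mul, hc, add_zero]
  have hw : Function.update w a (w a + ∑ b, c b • w b) = fun x => ∑ b, T b x • w b := by
    funext x
    rcases eq_or_ne x a with rfl | hx
    · simp [T, vecMulVec_apply, one_apply, add_smul, Finset.sum_add_distrib]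
    · simp [T, vecMulVec_apply, one_apply, hx]
  rw [hw, gram_sum_smul, det_mul, det_mul, det_conjTranspose, hT, star_one, one_mul, mul_one]

theorem Matrix.det_gram_eq_det_gram_removeNth_mul {m : ℕ} (w : Fin (m + 1) → E)
    (k : Fin (m + 1)) :
    (gram 𝕜 w).det = (gram 𝕜 (k.removeNth w)).det *
      (‖w k - (Submodule.span 𝕜 (Set.range (k.removeNth w))).starProjection (w k)‖ ^ 2 : ℝ) := by
  set K := Submodule.span 𝕜 (Set.range (k.removeNth w))
  set r := w k - K.starProjection (w k)
  obtain ⟨c, hc⟩ :=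
    (Submodule.mem_span_range_iff_exists_fun 𝕜).mp (K.starProjection_apply_mem (w k))
  have hshear : (gram 𝕜 w).det = (gram 𝕜 (Function.update w k r)).det := by
    set d : Fin (m + 1) → 𝕜 := Fin.insertNth k 0 c
    rw [← det_gram_update_add_sum_smul (Function.update w k r) k d
      (Fin.insertNth_apply_same _ _ _)]
    congr
    have hp : ∑ b, d b • Function.update w k r b = K.starProjection (w k) := by
      simp [Fin.sum_univ_succAbove _ k, d, Fin.removeNth, ← hc]
    rw [Function.update_idem, Function.update_self, hp, sub_add_cancel, Function.update_eq_self]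
  have hr : ∀ l, ⟪r, w (k.succAbove l)⟫_𝕜 = 0 := fun l =>
    (K.mem_orthogonal' r).mp (K.sub_starProjection_mem_orthogonal (w k)) _
      (Submodule.subset_span ⟨l, rfl⟩)
  have hbase : (gram 𝕜 (Function.update w k r)).submatrix k.succAbove k.succAbove
      = gram 𝕜 (k.removeNth w) := by
    ext a b
    simp [gram_apply, Fin.removeNth]
  rw [hshear, det_succ_row _ k, Fin.sum_univ_succAbove _ k]
  simp [gram_apply, hr, hbase, mul_comm]

theorem Matrix.det_gram_removeNth_mul_eq_swap {m : ℕ} (w : Fin (m + 2) → E) (i : Fin (m + 2))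
    (k : Fin (m + 1)) :
    let K := Submodule.span 𝕜 (Set.range (k.removeNth (i.removeNth w)))
    (gram 𝕜 (i.removeNth w)).det * (‖w i - K.starProjection (w i)‖ ^ 2 : ℝ) =
      (gram 𝕜 ((i.succAbove k).removeNth w)).det *
        (‖w (i.succAbove k) - K.starProjection (w (i.succAbove k))‖ ^ 2 : ℝ) := by
  intro K
  have hswap := Fin.removeNth_removeNth_eq_swap w k i
  have hi : (i.succAbove k).removeNth w (k.predAbove i) = w i :=
    congrArg w (Fin.succAbove_succAbove_predAbove i k)
  rw [det_gram_eq_det_gram_removeNth_mul _ k, det_gram_eq_det_gram_removeNth_mul _ (k.predAbove i),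
    ← hswap, hi]
  simp only [Fin.removeNth, K]
  ring

end Gram

/-- Base–height formula: for an `(n+1) × (n+1)` real matrix `A` with columns `v l`, two
distinct column indices `i ≠ j`, and `P` the orthogonal projection onto the span `W` of
the remaining columns, the `(n)`-dimensional parallelotope volume
`√(det((A⁰ⁱ)ᵀ A⁰ⁱ))` times the residual norm `‖v i - P (v i)‖` is symmetric in `i, j`. -/
theorem base_height_symmetry
    (n : ℕ) (A : Matrix (Fin (n + 1)) (Fin (n + 1)) ℝ)
    (i j : Fin (n + 1)) (hij : i ≠ j)
    (v : Fin (n + 1) → EuclideanSpace ℝ (Fin (n + 1)))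
    (hv : ∀ l r, v l r = A r l)
    (W : Submodule ℝ (EuclideanSpace ℝ (Fin (n + 1))))
    (hW : W = Submodule.span ℝ (v '' {l | l ≠ i ∧ l ≠ j})) :
    Real.sqrt (((A.submatrix id i.succAbove)ᵀ * A.submatrix id i.succAbove).det)
        * ‖v i - (Submodule.orthogonalProjection W (v i) : EuclideanSpace ℝ (Fin (n + 1)))‖
      = Real.sqrt (((A.submatrix id j.succAbove)ᵀ * A.submatrix id j.succAbove).det)
        * ‖v j - (Submodule.orthogonalProjection W (v j) : EuclideanSpace ℝ (Fin (n + 1)))‖ := by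
  rcases n with _ | m
  · exact absurd (Subsingleton.elim (α := Fin 1) i j) hij
  obtain ⟨k, rfl⟩ := Fin.exists_succAbove_eq hij.symm
  have hspan : W = Submodule.span ℝ (Set.range (k.removeNth (i.removeNth v))) := by
    rw [hW, show k.removeNth (i.removeNth v) = v ∘ (i.succAbove ∘ k.succAbove) from rfl,
      Set.range_comp, Fin.range_succAbove_comp_succAbove]
    congr
    ext l
    simp
  have hcols : ∀ c : Fin (m + 2),
      (A.submatrix id c.succAbove)ᵀ * A.submatrix id c.succAbove = gram ℝ (c.removeNth v) := by
    intro c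
    rw [← conjTranspose_eq_transpose_of_trivial]
    exact (gram_eq_conjTranspose_mul_self _ (c.removeNth v) fun l r => hv _ r).symm
  have key := det_gram_removeNth_mul_eq_swap (𝕜 := ℝ) v i k
  simp only [← hspan, RCLike.ofReal_real_eq_id, id, ← hcols] at key
  rw [← Real.sqrt_sq (norm_nonneg (v i - _)), ← Real.sqrt_mul' _ (sq_nonneg _),
    ← Real.sqrt_sq (norm_nonneg (v (i.succAbove k) - _)), ← Real.sqrt_mul' _ (sq_nonneg _)]
  exact congrArg Real.sqrt key
end

section
/- Let S be an n×m real matrix of rank m (full column rank), so that SᵀS is invertible. Then ‖S(SᵀS)⁻¹Sᵀ − S Sᵀ‖_F = ‖I_m − SᵀS‖_F, where ‖·‖_F denotes the Frobenius norm, I_m the m×m identity matrix, and S(SᵀS)⁻¹Sᵀ the matrix of the orthogonal projection onto the column span of S. -/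
/-!
Write `G = SᵀS`; full column rank makes `G` invertible, and `G` is symmetric. The difference of
the two projections is then `S (G⁻¹ - 1) Sᵀ`, and by cyclicity of the trace its squared Frobenius
norm `tr (XᵀX)` equals `tr (((G⁻¹ - 1) G)²) = tr ((1 - G)²)`, the squared Frobenius norm of `1 - G`.
-/

open Matrix BigOperators

/-- The Frobenius norm of a real matrix: `‖M‖_F = √(∑ i j, (M i j)²)`. -/
noncomputable def frobeniusNorm {n m : ℕ} (M : Matrix (Fin n) (Fin m) ℝ) : ℝ :=
  Real.sqrt (∑ i, ∑ j, (M i j) ^ 2)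

namespace Matrix

variable {m n R : Type*} [Fintype m] [Fintype n]

theorem sum_sq_eq_trace_transpose_mul_self [CommSemiring R] (M : Matrix m n R) :
    ∑ i, ∑ j, M i j ^ 2 = (Mᵀ * M).trace := by
  simp only [trace, diag, mul_apply, transpose_apply, sq]
  exact Finset.sum_comm

theorem trace_transpose_mul_self_mul_mul_transpose [CommSemiring R] (S : Matrix m n R)
    (B : Matrix n n R) :
    ((S * B * Sᵀ)ᵀ * (S * B * Sᵀ)).trace = (Bᵀ * (Sᵀ * S) * (B * (Sᵀ * S))).trace := by
  simp only [transpose_mul, transpose_transpose, Matrix.mul_assoc]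
  rw [trace_mul_comm]
  simp only [Matrix.mul_assoc]

theorem isUnit_of_rank_eq_card [DecidableEq n] [Field R] {A : Matrix n n R}
    (h : A.rank = Fintype.card n) : IsUnit A := by
  rw [← mulVec_surjective_iff_isUnit]
  have hrange : LinearMap.range A.mulVecLin = ⊤ :=
    Submodule.eq_top_of_finrank_eq <| h.trans (Module.finrank_fintype_fun_eq_card R).symm
  exact LinearMap.range_eq_top.mp hrange

theorem isUnit_det_transpose_mul_self_of_rank_eq [DecidableEq n] [Field R] [LinearOrder R]
    [IsStrictOrderedRing R] {S : Matrix m n R} (h : S.rank = Fintype.card n) :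
    IsUnit (Sᵀ * S).det :=
  (isUnit_iff_isUnit_det _).mp <| isUnit_of_rank_eq_card <| (rank_transpose_mul_self S).trans h

end Matrix

theorem frobeniusNorm_eq_sqrt_trace {n m : ℕ} (M : Matrix (Fin n) (Fin m) ℝ) :
    frobeniusNorm M = √(Mᵀ * M).trace := by
  rw [frobeniusNorm, sum_sq_eq_trace_transpose_mul_self]

/-- For an `n × m` real matrix `S` of full column rank (so `Sᵀ S` is invertible), the
Frobenius norm of the difference between the true orthogonal projection `S (SᵀS)⁻¹ Sᵀ`
onto the column span of `S` and the approximate projection `S Sᵀ` equals the Frobenius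
norm of `I - Sᵀ S`. -/
theorem frobenius_norm_projection_difference
    (n m : ℕ) (S : Matrix (Fin n) (Fin m) ℝ) (hrank : S.rank = m) :
    frobeniusNorm (S * (Sᵀ * S)⁻¹ * Sᵀ - S * Sᵀ)
      = frobeniusNorm ((1 : Matrix (Fin m) (Fin m) ℝ) - Sᵀ * S) := by
  have hG := isUnit_det_transpose_mul_self_of_rank_eq (hrank.trans (Fintype.card_fin m).symm)
  have hGsymm : (Sᵀ * S)ᵀ = Sᵀ * S := by rw [transpose_mul, transpose_transpose]
  set G := Sᵀ * S
  have hdiff : S * G⁻¹ * Sᵀ - S * Sᵀ = S * (G⁻¹ - 1) * Sᵀ := by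
    rw [Matrix.mul_sub, Matrix.sub_mul, Matrix.mul_one]
  have hBsymm : (G⁻¹ - 1)ᵀ = G⁻¹ - 1 := by
    rw [transpose_sub, transpose_nonsing_inv, hGsymm, transpose_one]
  have hBG : (G⁻¹ - 1) * G = 1 - G := by
    rw [Matrix.sub_mul, nonsing_inv_mul G hG, Matrix.one_mul]
  rw [frobeniusNorm_eq_sqrt_trace, frobeniusNorm_eq_sqrt_trace, hdiff,
    trace_transpose_mul_self_mul_mul_transpose, hBsymm, hBG, transpose_sub, transpose_one, hGsymm]
end

section
/- Let S be an n×m real matrix of rank m (so SᵀS is invertible) and let v ∈ ℝⁿ. Then ‖S(SᵀS)⁻¹Sᵀ v − S Sᵀ v‖ ≤ ‖I_m − SᵀS‖_F · ‖v‖, where the vector norms are Euclidean, ‖·‖_F is the Frobenius norm, and I_m is the m×m identity. In words: the difference between the true orthogonal projection of v onto the column span of S and the approximate projection S Sᵀ v (exact when the columns of S are orthonormal) is bounded by ‖I_m − SᵀS‖_F times ‖v‖. -/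
open Matrix BigOperators

/-!
Put `A = SᵀS`, which is positive definite, and `Q = S A^(-1/2)`, which has orthonormal columns.
Then `S A⁻¹ Sᵀ - S Sᵀ = Q (1 - A) Qᵀ`. Both `Q` and `Qᵀ` are contractions and the Frobenius norm
bounds the operator norm, so `‖Q (1 - A) Qᵀ v‖ ≤ ‖1 - A‖_F ‖v‖`.
-/

open WithLp
open scoped ComplexOrder

namespace Matrix

theorem mulVec_injective_of_rank_eq_card {m n K : Type*} [Fintype n] [Field K]
    {A : Matrix m n K} (hA : A.rank = Fintype.card n) : Function.Injective A.mulVec := by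
  have hker := LinearMap.finrank_range_add_finrank_ker A.mulVecLin
  rw [← rank, hA, Module.finrank_fintype_fun_eq_card, add_eq_left,
    Submodule.finrank_eq_zero] at hker
  exact LinearMap.ker_eq_bot.mp hker

variable {m n 𝕜 : Type*} [Fintype m] [Fintype n] [RCLike 𝕜]

theorem mul_self_eq_inv_of_mul_mul_eq_one [DecidableEq n] {R A : Matrix n n 𝕜}
    (h : R * A * R = 1) : R * R = A⁻¹ := by
  rw [mul_assoc, mul_eq_one_comm, mul_assoc] at h
  exact (inv_eq_right_inv h).symm

theorem PosDef.exists_isHermitian_mul_mul_eq_one [DecidableEq n] {A : Matrix n n 𝕜}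
    (hA : A.PosDef) : ∃ R : Matrix n n 𝕜, R.IsHermitian ∧ R * A * R = 1 := by
  -- the spectrum of a matrix is finite, hence discrete
  have hcont (f : ℝ → ℝ) : ContinuousOn f (spectrum ℝ A) := by
    rw [continuousOn_iff_continuous_domRestrict]; fun_prop
  refine ⟨cfc (fun x => (√x)⁻¹) A, cfc_predicate _ A, ?_⟩
  nth_rewrite 2 [← cfc_id' ℝ A hA.1.isSelfAdjoint]
  rw [← cfc_mul _ _ A (hcont _) (hcont _), ← cfc_mul _ _ A (hcont _) (hcont _),
    ← cfc_one ℝ A hA.1.isSelfAdjoint]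
  refine cfc_congr fun x hx => ?_
  have hx : 0 < x := by
    rw [hA.1.spectrum_real_eq_range_eigenvalues] at hx
    obtain ⟨i, rfl⟩ := hx
    exact hA.eigenvalues_pos i
  calc (√x)⁻¹ * x * (√x)⁻¹ = x / (√x * √x) := by ring
    _ = 1 := by rw [Real.mul_self_sqrt hx.le, div_self hx.ne']

theorem exists_isometry_conj_eq_proj_sub [DecidableEq m] (S : Matrix n m 𝕜)
    (hS : (Sᴴ * S).PosDef) :
    ∃ Q : Matrix n m 𝕜, Qᴴ * Q = 1 ∧
      S * (Sᴴ * S)⁻¹ * Sᴴ - S * Sᴴ = Q * (1 - Sᴴ * S) * Qᴴ := by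
  obtain ⟨R, hRherm, hR⟩ := hS.exists_isHermitian_mul_mul_eq_one
  refine ⟨S * R, ?_, ?_⟩
  · rw [conjTranspose_mul, hRherm.eq, ← hR]
    simp only [Matrix.mul_assoc]
  · rw [← mul_self_eq_inv_of_mul_mul_eq_one hR, conjTranspose_mul, hRherm.eq]
    calc S * (R * R) * Sᴴ - S * Sᴴ = S * (R * R - R * (Sᴴ * S) * R) * Sᴴ := by
          rw [hR, Matrix.mul_sub, Matrix.sub_mul, Matrix.mul_one]
      _ = S * R * (1 - Sᴴ * S) * (R * Sᴴ) := by
          simp only [Matrix.mul_sub, Matrix.sub_mul, Matrix.mul_one, Matrix.mul_assoc]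

section L2Operator

open scoped Matrix.Norms.L2Operator

theorem l2_opNorm_le_one_of_conjTranspose_mul_self_eq_one [DecidableEq n] {Q : Matrix m n 𝕜}
    (hQ : Qᴴ * Q = 1) : ‖Q‖ ≤ 1 := by
  have hone : ‖(1 : Matrix n n 𝕜)‖ ≤ 1 := by
    rw [← diagonal_one, l2_opNorm_diagonal]
    exact (pi_norm_le_iff_of_nonneg zero_le_one).2 fun _ => norm_one.le
  rw [← hQ, l2_opNorm_conjTranspose_mul_self] at hone
  nlinarith [norm_nonneg Q]

theorem norm_mulVec_le_of_conjTranspose_mul_self_eq_one [DecidableEq n] {Q : Matrix m n 𝕜}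
    (hQ : Qᴴ * Q = 1) (x : n → 𝕜) : ‖toLp 2 (Q *ᵥ x)‖ ≤ ‖toLp 2 x‖ :=
  (l2_opNorm_mulVec Q (toLp 2 x)).trans <|
    mul_le_of_le_one_left (norm_nonneg _) (l2_opNorm_le_one_of_conjTranspose_mul_self_eq_one hQ)

theorem norm_conjTranspose_mulVec_le_of_conjTranspose_mul_self_eq_one [DecidableEq n]
    {Q : Matrix m n 𝕜} (hQ : Qᴴ * Q = 1) (x : m → 𝕜) : ‖toLp 2 (Qᴴ *ᵥ x)‖ ≤ ‖toLp 2 x‖ := by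
  classical
  refine (l2_opNorm_mulVec Qᴴ (toLp 2 x)).trans <| mul_le_of_le_one_left (norm_nonneg _) ?_
  rw [l2_opNorm_conjTranspose]
  exact l2_opNorm_le_one_of_conjTranspose_mul_self_eq_one hQ

end L2Operator

section Frobenius

attribute [local instance] Matrix.frobeniusNormedAddCommGroup

theorem frobenius_norm_mulVec (A : Matrix m n 𝕜) (x : n → 𝕜) :
    ‖toLp 2 (A *ᵥ x)‖ ≤ ‖A‖ * ‖toLp 2 x‖ := by
  rw [← frobenius_norm_replicateCol (ι := Unit), ← frobenius_norm_replicateCol (ι := Unit),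
    replicateCol_mulVec]
  exact frobenius_norm_mul _ _

theorem frobenius_norm_conj_mulVec_le [DecidableEq n] {Q : Matrix m n 𝕜} (hQ : Qᴴ * Q = 1)
    (B : Matrix n n 𝕜) (v : m → 𝕜) : ‖toLp 2 ((Q * B * Qᴴ) *ᵥ v)‖ ≤ ‖B‖ * ‖toLp 2 v‖ :=
  calc ‖toLp 2 ((Q * B * Qᴴ) *ᵥ v)‖ = ‖toLp 2 (Q *ᵥ (B *ᵥ (Qᴴ *ᵥ v)))‖ := by
        simp only [mulVec_mulVec, Matrix.mul_assoc]
    _ ≤ ‖toLp 2 (B *ᵥ (Qᴴ *ᵥ v))‖ := norm_mulVec_le_of_conjTranspose_mul_self_eq_one hQ _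
    _ ≤ ‖B‖ * ‖toLp 2 (Qᴴ *ᵥ v)‖ := frobenius_norm_mulVec _ _
    _ ≤ ‖B‖ * ‖toLp 2 v‖ := by
        gcongr
        exact norm_conjTranspose_mulVec_le_of_conjTranspose_mul_self_eq_one hQ v

end Frobenius

end Matrix

theorem sqrt_sum_sq_eq_norm_toLp {ι : Type*} [Fintype ι] (x : ι → ℝ) :
    √(∑ i, x i ^ 2) = ‖toLp 2 x‖ := by
  simp [EuclideanSpace.norm_eq]

attribute [local instance] Matrix.frobeniusNormedAddCommGroup in
theorem frobeniusNorm_eq_norm {n m : ℕ} (M : Matrix (Fin n) (Fin m) ℝ) :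
    frobeniusNorm M = ‖M‖ := by
  simp [frobeniusNorm, frobenius_norm_def, Real.sqrt_eq_rpow]

/-- For an `n × m` real matrix `S` of full column rank and any vector `v`, the Euclidean
distance between the true orthogonal projection `S (SᵀS)⁻¹ Sᵀ v` of `v` onto the column
span of `S` and the approximate projection `S Sᵀ v` is bounded by
`‖I - Sᵀ S‖_F · ‖v‖`. -/
theorem projection_approximation_bound
    (n m : ℕ) (S : Matrix (Fin n) (Fin m) ℝ) (hrank : S.rank = m)
    (v : Fin n → ℝ) :
    Real.sqrt (∑ r, ((S * (Sᵀ * S)⁻¹ * Sᵀ).mulVec v r - (S * Sᵀ).mulVec v r) ^ 2)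
      ≤ frobeniusNorm ((1 : Matrix (Fin m) (Fin m) ℝ) - Sᵀ * S)
        * Real.sqrt (∑ r, (v r) ^ 2) := by
  have hpos : (Sᴴ * S).PosDef :=
    .conjTranspose_mul_self S (mulVec_injective_of_rank_eq_card (by simpa using hrank))
  obtain ⟨Q, hQ, hproj⟩ := exists_isometry_conj_eq_proj_sub S hpos
  have hbound := frobenius_norm_conj_mulVec_le hQ (1 - Sᴴ * S) v
  simp only [conjTranspose_eq_transpose_of_trivial] at hproj hbound
  rwa [← hproj, sub_mulVec, ← sqrt_sum_sq_eq_norm_toLp, ← sqrt_sum_sq_eq_norm_toLp,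
    ← frobeniusNorm_eq_norm] at hbound
end

section
/- Fix reals μ > 0, ω_p > 0, ε, γ, and define for ω > 0: s₁₂²(ω) = (3e^ε ω² + 2ω ω_p + e^ε ω μ − ω_p μ)² / (4(3e^{2ε}ω² + 4e^ε ω ω_p + 3ω_p²)(ω² + ωμ + μ²)), s₁₃²(ω) = (3e^{ε+γ} ω² + 2e^γ ω ω_p + e^ε ω μ − ω_p μ)² / (4(3e^{2ε}ω² + 4e^ε ω ω_p + 3ω_p²)(e^{2γ}ω² + e^γ ωμ + μ²)), and s₂₃²(ω) = e^{2γ} ω⁴ / (4(ω² + ωμ + μ²)(e^{2γ}ω² + e^γ ωμ + μ²)). Then the sum Σ(ω) = s₁₂²(ω) + s₁₃²(ω) + s₂₃²(ω) satisfies lim_{ω→∞} Σ(ω) = 7/4 and lim_{ω→0⁺} Σ(ω) = 1/6. -/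
/-!
Both limits are values of `Σ` at points where it is continuous. Its denominators are products
of positive definite binary quadratic forms (`x² + xy + y²` and `3x² + 4xy + 3y²`, after
absorbing the exponentials), so `Σ` is continuous in `(μ, ωp, ω)` wherever `ω ≠ 0`, or
`μ ≠ 0` and `ωp ≠ 0`; this gives the limit `Σ(μ, ωp, 0) = 1/6` at `ω → 0⁺`. As `Σ` is
homogeneous of degree `0` in `(μ, ωp, ω)`, `Σ(μ, ωp, ω) = Σ(μ/ω, ωp/ω, 1)`, so the limit at
`ω → ∞` is `Σ(0, 0, 1) = 7/4`.
-/

open Filter Topology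

/-- The sum `Σ(ω) = s₁₂²(ω) + s₁₃²(ω) + s₂₃²(ω)` of squared normalized inner products of
the retained Laplacian columns of the Hopfield–Ninio network in the energetic regime. -/
noncomputable def hopfieldSigma (μ ωp ε γ : ℝ) (ω : ℝ) : ℝ :=
  (3 * Real.exp ε * ω ^ 2 + 2 * ω * ωp + Real.exp ε * ω * μ - ωp * μ) ^ 2 /
      (4 * (3 * Real.exp (2 * ε) * ω ^ 2 + 4 * Real.exp ε * ω * ωp + 3 * ωp ^ 2) *
        (ω ^ 2 + ω * μ + μ ^ 2))
    + (3 * Real.exp (ε + γ) * ω ^ 2 + 2 * Real.exp γ * ω * ωp + Real.exp ε * ω * μ - ωp * μ) ^ 2 /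
      (4 * (3 * Real.exp (2 * ε) * ω ^ 2 + 4 * Real.exp ε * ω * ωp + 3 * ωp ^ 2) *
        (Real.exp (2 * γ) * ω ^ 2 + Real.exp γ * ω * μ + μ ^ 2))
    + Real.exp (2 * γ) * ω ^ 4 /
      (4 * (ω ^ 2 + ω * μ + μ ^ 2) * (Real.exp (2 * γ) * ω ^ 2 + Real.exp γ * ω * μ + μ ^ 2))

section PositiveDefinite

variable {R : Type*} [CommRing R] [LinearOrder R] [IsStrictOrderedRing R] {a b : R}

theorem sq_add_sq_pos_of_ne_zero_or (h : a ≠ 0 ∨ b ≠ 0) : 0 < a ^ 2 + b ^ 2 := by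
  rcases h with h | h <;> positivity

theorem sq_add_mul_add_sq_pos (h : a ≠ 0 ∨ b ≠ 0) : 0 < a ^ 2 + a * b + b ^ 2 := by
  nlinarith [sq_add_sq_pos_of_ne_zero_or h, sq_nonneg (a + b)]

theorem three_sq_add_four_mul_add_three_sq_pos (h : a ≠ 0 ∨ b ≠ 0) :
    0 < 3 * a ^ 2 + 4 * a * b + 3 * b ^ 2 := by
  nlinarith [sq_add_sq_pos_of_ne_zero_or h, sq_nonneg (a + b)]

end PositiveDefinite

theorem exp_two_mul_sq_add_exp_mul_add_sq_pos (c : ℝ) {x y : ℝ} (h : x ≠ 0 ∨ y ≠ 0) :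
    0 < Real.exp (2 * c) * x ^ 2 + Real.exp c * x * y + y ^ 2 := by
  have hcx : Real.exp c * x ≠ 0 ∨ y ≠ 0 := h.imp_left (mul_ne_zero (Real.exp_pos c).ne')
  exact (sq_add_mul_add_sq_pos hcx).trans_eq (by rw [two_mul, Real.exp_add]; ring)

theorem three_exp_two_mul_sq_add_four_exp_mul_add_three_sq_pos (c : ℝ) {x y : ℝ}
    (h : x ≠ 0 ∨ y ≠ 0) :
    0 < 3 * Real.exp (2 * c) * x ^ 2 + 4 * Real.exp c * x * y + 3 * y ^ 2 := by
  have hcx : Real.exp c * x ≠ 0 ∨ y ≠ 0 := h.imp_left (mul_ne_zero (Real.exp_pos c).ne')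
  exact (three_sq_add_four_mul_add_three_sq_pos hcx).trans_eq (by rw [two_mul, Real.exp_add]; ring)

/-- Every term of `Σ` is a quotient of two quartic forms in `(μ, ωp, ω)`. -/
theorem hopfieldSigma_mul_mul_mul (μ ωp ε γ ω : ℝ) {t : ℝ} (ht : t ≠ 0) :
    hopfieldSigma (t * μ) (t * ωp) ε γ (t * ω) = hopfieldSigma μ ωp ε γ ω := by
  have quartic_div_quartic {a b a' b' : ℝ} (ha : a' = t ^ 4 * a) (hb : b' = t ^ 4 * b) :
      a' / b' = a / b := by
    rw [ha, hb, mul_div_mul_left _ _ (pow_ne_zero 4 ht)]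
  simp only [hopfieldSigma]
  refine congrArg₂ (· + ·) (congrArg₂ (· + ·) ?_ ?_) ?_ <;>
    exact quartic_div_quartic (by ring) (by ring)

theorem ContinuousAt.hopfieldSigma {α : Type*} [TopologicalSpace α] {m w o : α → ℝ} {t₀ : α}
    (ε γ : ℝ) (hm : ContinuousAt m t₀) (hw : ContinuousAt w t₀) (ho : ContinuousAt o t₀)
    (h : o t₀ ≠ 0 ∨ (m t₀ ≠ 0 ∧ w t₀ ≠ 0)) :
    ContinuousAt (fun t => hopfieldSigma (m t) (w t) ε γ (o t)) t₀ := by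
  have hD₁ := three_exp_two_mul_sq_add_four_exp_mul_add_three_sq_pos ε (h.imp_right And.right)
  have hD₂ := sq_add_mul_add_sq_pos (h.imp_right And.left)
  have hD₃ := exp_two_mul_sq_add_exp_mul_add_sq_pos γ (h.imp_right And.left)
  unfold _root_.hopfieldSigma
  refine (((ContinuousAt.div ?_ ?_ ?_).add (ContinuousAt.div ?_ ?_ ?_)).add
    (ContinuousAt.div ?_ ?_ ?_)) <;> first | positivity | fun_prop

theorem hopfieldSigma_zero_zero_one (ε γ : ℝ) : hopfieldSigma 0 0 ε γ 1 = 7 / 4 := by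
  simp only [hopfieldSigma, two_mul, Real.exp_add]
  field_simp
  ring

theorem hopfieldSigma_apply_zero {μ ωp : ℝ} (ε γ : ℝ) (hμ : μ ≠ 0) (hωp : ωp ≠ 0) :
    hopfieldSigma μ ωp ε γ 0 = 1 / 6 := by
  simp only [hopfieldSigma]
  field_simp
  ring

/-- In the energetic regime of the Hopfield–Ninio scheme, the sum `Σ(ω)` of the three
squared normalized inner products tends to `7/4` as `ω → ∞` and to `1/6` as `ω → 0⁺`. -/
theorem hopfieldSigma_limits (μ ωp ε γ : ℝ) (hμ : 0 < μ) (hωp : 0 < ωp) :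
    Tendsto (hopfieldSigma μ ωp ε γ) atTop (𝓝 (7 / 4))
      ∧ Tendsto (hopfieldSigma μ ωp ε γ) (𝓝[>] 0) (𝓝 (1 / 6)) := by
  constructor
  · have hcont : ContinuousAt (fun x => hopfieldSigma (x * μ) (x * ωp) ε γ 1) 0 :=
      .hopfieldSigma ε γ (by fun_prop) (by fun_prop) continuousAt_const (.inl one_ne_zero)
    have hlim := hcont.tendsto.comp tendsto_inv_atTop_zero
    rw [zero_mul, zero_mul, hopfieldSigma_zero_zero_one] at hlim
    refine hlim.congr' ?_
    filter_upwards [eventually_ne_atTop 0] with ω hω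
    simpa [inv_mul_cancel₀ hω] using hopfieldSigma_mul_mul_mul μ ωp ε γ ω (inv_ne_zero hω)
  · have hcont : ContinuousAt (hopfieldSigma μ ωp ε γ) 0 :=
      .hopfieldSigma (o := id) ε γ continuousAt_const continuousAt_const continuousAt_id
        (.inr ⟨hμ.ne', hωp.ne'⟩)
    rw [← hopfieldSigma_apply_zero ε γ hμ.ne' hωp.ne']
    exact hcont.tendsto.mono_left nhdsWithin_le_nhds
end

section
/- Fix reals μ > 0 and γ. The function s₂₃²(ω) = e^{2γ} ω⁴ / (4 (ω² + ωμ + μ²)(e^{2γ} ω² + e^γ ωμ + μ²)) is strictly increasing in ω on (0, ∞). -/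
/-! Both factors `ω² / (ω² + ωμ + μ²)` and `e^{2γ}ω² / (e^{2γ}ω² + e^γ ωμ + μ²)` of `4 s₂₃²` have
the shape `a x² / (a x² + b x + c)` with `a, c > 0` and `b ≥ 0`, which equals
`a / (a + b / x + c / x²)` and so increases strictly on `(0, ∞)`; a product of nonnegative
strictly increasing functions is strictly increasing. -/

open Set

theorem StrictMonoOn.mul {α M₀ : Type*} [Preorder α] [MulZeroClass M₀] [PartialOrder M₀]
    [PosMulStrictMono M₀] [MulPosStrictMono M₀] {s : Set α} {f g : α → M₀}
    (hf : StrictMonoOn f s) (hg : StrictMonoOn g s) (hf₀ : ∀ x ∈ s, 0 ≤ f x)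
    (hg₀ : ∀ x ∈ s, 0 ≤ g x) : StrictMonoOn (fun x => f x * g x) s :=
  fun x hx _ hy hxy => mul_lt_mul'' (hf hx hy hxy) (hg hx hy hxy) (hf₀ x hx) (hg₀ x hx)

theorem strictMonoOn_mul_sq_div {K : Type*} [Field K] [LinearOrder K] [IsStrictOrderedRing K]
    {a b c : K} (ha : 0 < a) (hb : 0 ≤ b) (hc : 0 < c) :
    StrictMonoOn (fun x : K => a * x ^ 2 / (a * x ^ 2 + b * x + c)) (Ioi 0) := by
  intro x (hx : 0 < x) y (hy : 0 < y) hxy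
  rw [div_lt_div_iff₀ (by positivity) (by positivity)]
  -- the cross-multiplied difference is `a b x y (y - x) + a c (y - x)(y + x)`
  nlinarith [mul_pos (mul_pos ha hc) (mul_pos (sub_pos.2 hxy) (add_pos hx hy)),
    mul_nonneg (mul_nonneg (mul_nonneg ha.le hb) (mul_pos hx hy).le) (sub_pos.2 hxy).le]

/-- The squared normalized inner product
`s₂₃²(ω) = e^{2γ} ω⁴ / (4 (ω² + ωμ + μ²)(e^{2γ} ω² + e^γ ωμ + μ²))` of the two
product-adjacent Laplacian columns of the Hopfield–Ninio network (energetic regime,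
drive rate `μ > 0`, binding-energy difference `γ`) is strictly increasing in `ω` on
`(0, ∞)`. -/
theorem s23_strictMonoOn (μ γ : ℝ) (hμ : 0 < μ) :
    StrictMonoOn
      (fun ω : ℝ => Real.exp (2 * γ) * ω ^ 4 /
        (4 * (ω ^ 2 + ω * μ + μ ^ 2) *
          (Real.exp (2 * γ) * ω ^ 2 + Real.exp γ * ω * μ + μ ^ 2)))
      (Set.Ioi 0) := by
  have hP := strictMonoOn_mul_sq_div one_pos hμ.le (pow_pos hμ 2)
  have hQ := strictMonoOn_mul_sq_div (Real.exp_pos (2 * γ))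
    (mul_pos (Real.exp_pos γ) hμ).le (pow_pos hμ 2)
  have hPQ := hP.mul hQ (fun x (hx : 0 < x) => by positivity)
    (fun x (hx : 0 < x) => by positivity)
  refine ((strictMono_mul_left_of_pos (by norm_num : (0 : ℝ) < 1 / 4)).comp_strictMonoOn
    hPQ).congr fun ω (hω : 0 < ω) => ?_
  simp only [Function.comp_apply]
  field_simp
end

section
/- Fix a real γ > 0 and a natural number N ≥ 1, and define the energetic-regime ladder error fraction ξ(η) = (1 + η)^N / (e^γ (1 + η e^γ)^N) for η ≥ 0. Then ξ is strictly decreasing on (0, ∞), ξ(η) > e^{−(N+1)γ} for every η ≥ 0, and lim_{η→∞} ξ(η) = e^{−(N+1)γ}. -/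
open Filter Topology

/-!
Writing `c = e^γ > 1` and `r(η) = (1 + η) / (1 + η c)`, the error fraction is `c⁻¹ r(η)^N`.
The ratio `r` decreases strictly from `r(0) = 1` towards its limit `c⁻¹`, never reaching it,
so `c⁻¹ r^N` decreases strictly towards `c⁻¹ (c⁻¹)^N = e^{-(N+1)γ}`.
-/

/-- The factor `(f + d_R) / (f + d_W)` contributed by each loop, with `η = d_R / f`, `c = e^γ`. -/
noncomputable def ladderRatio (c η : ℝ) : ℝ := (1 + η) / (1 + η * c)

theorem div_mul_pow_eq_inv_mul_ladderRatio_pow (c η : ℝ) (N : ℕ) :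
    (1 + η) ^ N / (c * (1 + η * c) ^ N) = c⁻¹ * ladderRatio c η ^ N := by
  rw [ladderRatio, div_pow, div_eq_mul_inv, div_eq_mul_inv, mul_inv]
  ring

section LadderRatio

variable {c : ℝ}

theorem ladderRatio_pos (hc : 0 ≤ c) {η : ℝ} (hη : 0 ≤ η) : 0 < ladderRatio c η := by
  unfold ladderRatio
  positivity

theorem ladderRatio_strictAntiOn (hc : 1 < c) : StrictAntiOn (ladderRatio c) (Set.Ici 0) := by
  intro a ha b hb hab
  simp only [Set.mem_Ici] at ha hb
  unfold ladderRatio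
  rw [div_lt_div_iff₀ (by positivity) (by positivity)]
  nlinarith [mul_pos (sub_pos.mpr hab) (sub_pos.mpr hc)]

theorem inv_lt_ladderRatio (hc : 1 < c) {η : ℝ} (hη : 0 ≤ η) : c⁻¹ < ladderRatio c η := by
  have hc0 : 0 < c := by linarith
  unfold ladderRatio
  rw [inv_lt_iff_one_lt_mul₀ hc0, div_mul_eq_mul_div, one_lt_div (by positivity)]
  nlinarith

theorem tendsto_ladderRatio_atTop (hc : 0 < c) :
    Tendsto (ladderRatio c) atTop (𝓝 c⁻¹) := by
  have hlim : Tendsto (fun η : ℝ => (η⁻¹ + 1) / (η⁻¹ + c)) atTop (𝓝 ((0 + 1) / (0 + c))) :=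
    (tendsto_inv_atTop_zero.add_const 1).div (tendsto_inv_atTop_zero.add_const c)
      (by simpa using hc.ne')
  rw [zero_add, zero_add, one_div] at hlim
  refine hlim.congr' ?_
  filter_upwards [eventually_gt_atTop (0 : ℝ)] with η hη
  unfold ladderRatio
  rw [div_eq_div_iff (by positivity) (by positivity)]
  field_simp

end LadderRatio

section LadderError

variable {c : ℝ} {N : ℕ}

theorem inv_mul_ladderRatio_pow_strictAntiOn (hc : 1 < c) (hN : N ≠ 0) :
    StrictAntiOn (fun η => c⁻¹ * ladderRatio c η ^ N) (Set.Ici 0) := by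
  intro a ha b hb hab
  have hr : ladderRatio c b < ladderRatio c a := ladderRatio_strictAntiOn hc ha hb hab
  have hpow := pow_lt_pow_left₀ hr (ladderRatio_pos (by linarith) hb).le hN
  exact mul_lt_mul_of_pos_left hpow (inv_pos.mpr (by linarith))

theorem inv_pow_succ_lt_inv_mul_ladderRatio_pow (hc : 1 < c) (hN : N ≠ 0) {η : ℝ}
    (hη : 0 ≤ η) : c⁻¹ ^ (N + 1) < c⁻¹ * ladderRatio c η ^ N := by
  rw [pow_succ']
  have hpow := pow_lt_pow_left₀ (inv_lt_ladderRatio hc hη) (inv_pos.mpr (by linarith)).le hN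
  exact mul_lt_mul_of_pos_left hpow (inv_pos.mpr (by linarith))

theorem tendsto_inv_mul_ladderRatio_pow_atTop (hc : 0 < c) :
    Tendsto (fun η => c⁻¹ * ladderRatio c η ^ N) atTop (𝓝 (c⁻¹ ^ (N + 1))) := by
  rw [pow_succ']
  exact ((tendsto_ladderRatio_atTop hc).pow N).const_mul c⁻¹

end LadderError

theorem Real.exp_neg_natCast_add_one_mul (N : ℕ) (γ : ℝ) :
    Real.exp (-(((N : ℝ) + 1) * γ)) = (Real.exp γ)⁻¹ ^ (N + 1) := by
  rw [← Real.exp_neg, ← Real.exp_nat_mul]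
  push_cast
  ring_nf

/-- The energetic-regime ladder error fraction `ξ(η) = (1+η)^N / (e^γ (1+η e^γ)^N)`
(with `η = d_R/f` the discard-to-forward rate ratio) for `γ > 0` and `N ≥ 1` is strictly
decreasing on `(0, ∞)`, satisfies `ξ(η) > e^{−(N+1)γ}` for every `η ≥ 0`, and tends to
`e^{−(N+1)γ}` as `η → ∞`. -/
theorem ladder_energetic_error (γ : ℝ) (hγ : 0 < γ) (N : ℕ) (hN : 1 ≤ N) :
    StrictAntiOn
        (fun η : ℝ => (1 + η) ^ N / (Real.exp γ * (1 + η * Real.exp γ) ^ N))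
        (Set.Ioi 0)
    ∧ (∀ η : ℝ, 0 ≤ η →
        Real.exp (-(((N : ℝ) + 1) * γ))
          < (1 + η) ^ N / (Real.exp γ * (1 + η * Real.exp γ) ^ N))
    ∧ Tendsto (fun η : ℝ => (1 + η) ^ N / (Real.exp γ * (1 + η * Real.exp γ) ^ N))
        atTop (𝓝 (Real.exp (-(((N : ℝ) + 1) * γ)))) := by
  have hc : 1 < Real.exp γ := Real.one_lt_exp_iff.mpr hγ
  have hN0 : N ≠ 0 := by omega
  simp only [div_mul_pow_eq_inv_mul_ladderRatio_pow, Real.exp_neg_natCast_add_one_mul]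
  exact ⟨(inv_mul_ladderRatio_pow_strictAntiOn hc hN0).mono Set.Ioi_subset_Ici_self,
    fun η hη => inv_pow_succ_lt_inv_mul_ladderRatio_pow hc hN0 hη,
    tendsto_inv_mul_ladderRatio_pow_atTop (Real.exp_pos γ)⟩
end

section
/- Fix a real δ > 0 and a natural number α ≥ 1, and define the kinetic-regime ladder error fraction ξ(η, φ) = ((φ + 1)^α (1 + η e^δ)^α) / ((φ e^δ + 1)^α (1 + η)^α) for η ≥ 0, φ ≥ 0. Then ξ(η, φ) > e^{−αδ} for all η ≥ 0, φ ≥ 0, and lim_{φ→∞} ξ(0, φ) = e^{−αδ}; hence the infimum of ξ over η ≥ 0, φ ≥ 0 equals e^{−αδ}, approached in the limit η → 0, φ → ∞. -/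
open Filter Topology

/-- The kinetic-regime ladder error fraction
`ξ(η, φ) = (φ+1)^α (1+η e^δ)^α / ((φ e^δ + 1)^α (1+η)^α)`. -/
noncomputable def ladderKineticError (δ : ℝ) (α : ℕ) (η φ : ℝ) : ℝ :=
  ((φ + 1) ^ α * (1 + η * Real.exp δ) ^ α) /
    ((φ * Real.exp δ + 1) ^ α * (1 + η) ^ α)

/-! With `E = e^δ > 1`, the error fraction is the `α`-th power of `(φ+1)/(φE+1) · (1+ηE)/(1+η)`.
The first factor strictly exceeds `E⁻¹` and tends to it as `φ → ∞`; the second is at least `1`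
and equals `1` at `η = 0`. So `ξ > E^{-α} = e^{-αδ}` everywhere, and `ξ(0, φ) → e^{-αδ}`, which
makes `e^{-αδ}` the infimum. -/

lemma inv_lt_add_one_div_mul_add_one {E φ : ℝ} (hE : 1 < E) (hφ : 0 ≤ φ) :
    E⁻¹ < (φ + 1) / (φ * E + 1) := by
  rw [lt_div_iff₀ (by positivity), inv_mul_lt_iff₀ (by linarith)]
  nlinarith

lemma one_le_one_add_mul_div_one_add {E η : ℝ} (hE : 1 ≤ E) (hη : 0 ≤ η) :
    1 ≤ (1 + η * E) / (1 + η) := by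
  rw [one_le_div (by linarith)]
  nlinarith

lemma tendsto_add_one_div_mul_add_one {E : ℝ} (hE : E ≠ 0) :
    Tendsto (fun φ : ℝ => (φ + 1) / (φ * E + 1)) atTop (𝓝 E⁻¹) := by
  have hlim : Tendsto (fun φ : ℝ => (1 + φ⁻¹) / (E + φ⁻¹)) atTop (𝓝 ((1 + 0) / (E + 0))) :=
    (tendsto_const_nhds.add tendsto_inv_atTop_zero).div
      (tendsto_const_nhds.add tendsto_inv_atTop_zero) (by simpa using hE)
  rw [add_zero, add_zero, one_div] at hlim
  refine hlim.congr' ?_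
  filter_upwards [eventually_gt_atTop (0 : ℝ)] with φ hφ
  field_simp

lemma ladderKineticError_eq (δ : ℝ) (α : ℕ) (η φ : ℝ) :
    ladderKineticError δ α η φ =
      ((φ + 1) / (φ * Real.exp δ + 1) * ((1 + η * Real.exp δ) / (1 + η))) ^ α := by
  rw [ladderKineticError, mul_pow, div_pow, div_pow, div_mul_div_comm]

lemma ladderKineticError_zero_left (δ : ℝ) (α : ℕ) (φ : ℝ) :
    ladderKineticError δ α 0 φ = ((φ + 1) / (φ * Real.exp δ + 1)) ^ α := by
  simp [ladderKineticError_eq]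

lemma exp_neg_natCast_mul (α : ℕ) (δ : ℝ) :
    Real.exp (-((α : ℝ) * δ)) = (Real.exp δ)⁻¹ ^ α := by
  rw [Real.exp_neg, Real.exp_nat_mul, inv_pow]

lemma exp_neg_natCast_mul_lt_ladderKineticError {δ : ℝ} (hδ : 0 < δ) {α : ℕ} (hα : α ≠ 0)
    {η φ : ℝ} (hη : 0 ≤ η) (hφ : 0 ≤ φ) :
    Real.exp (-((α : ℝ) * δ)) < ladderKineticError δ α η φ := by
  have hE : 1 < Real.exp δ := Real.one_lt_exp_iff.mpr hδ
  have hφ_factor := inv_lt_add_one_div_mul_add_one hE hφ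
  have hη_factor := one_le_one_add_mul_div_one_add hE.le hη
  rw [exp_neg_natCast_mul, ladderKineticError_eq]
  refine pow_lt_pow_left₀ ?_ (by positivity) hα
  exact hφ_factor.trans_le (le_mul_of_one_le_right (by positivity) hη_factor)

lemma tendsto_ladderKineticError_zero_left (δ : ℝ) (α : ℕ) :
    Tendsto (fun φ : ℝ => ladderKineticError δ α 0 φ) atTop
      (𝓝 (Real.exp (-((α : ℝ) * δ)))) := by
  simp only [ladderKineticError_zero_left, exp_neg_natCast_mul]
  exact (tendsto_add_one_div_mul_add_one (Real.exp_pos δ).ne').pow α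

/-- For `δ > 0` and `α ≥ 1`: `ξ(η, φ) > e^{−αδ}` for all `η ≥ 0`, `φ ≥ 0`;
`ξ(0, φ) → e^{−αδ}` as `φ → ∞`; hence the infimum of `ξ` over `η ≥ 0`, `φ ≥ 0`
equals `e^{−αδ}`, approached in the limit `η → 0`, `φ → ∞`. -/
theorem ladder_kinetic_error (δ : ℝ) (hδ : 0 < δ) (α : ℕ) (hα : 1 ≤ α) :
    (∀ η φ : ℝ, 0 ≤ η → 0 ≤ φ →
        Real.exp (-((α : ℝ) * δ)) < ladderKineticError δ α η φ)
    ∧ Tendsto (fun φ : ℝ => ladderKineticError δ α 0 φ) atTop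
        (𝓝 (Real.exp (-((α : ℝ) * δ))))
    ∧ IsGLB {x : ℝ | ∃ η ≥ (0 : ℝ), ∃ φ ≥ (0 : ℝ), x = ladderKineticError δ α η φ}
        (Real.exp (-((α : ℝ) * δ))) := by
  have hlower : ∀ η φ : ℝ, 0 ≤ η → 0 ≤ φ →
      Real.exp (-((α : ℝ) * δ)) < ladderKineticError δ α η φ := fun _ _ hη hφ =>
    exp_neg_natCast_mul_lt_ladderKineticError hδ (by omega) hη hφ
  have hlim := tendsto_ladderKineticError_zero_left δ α
  refine ⟨hlower, hlim, ?_, fun b hb => ?_⟩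
  · rintro x ⟨η, hη, φ, hφ, rfl⟩
    exact (hlower η φ hη hφ).le
  · refine ge_of_tendsto hlim ?_
    filter_upwards [eventually_ge_atTop (0 : ℝ)] with φ hφ
    exact hb ⟨0, le_rfl, φ, hφ, rfl⟩
end
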